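/- arXiv:2210.03820 — 4 statements merged into one kernel-verified Lean document; each statement's English description precedes it below -/
import Mathlib

section
/- Let λ ∈ ℝ^m with λ_i ≥ 0 for all i and λ not identically zero, Λ = diag(λ). Let g_1,…,g_n : ℝ^m → ℝ be differentiable and Λ-quasi-homogeneous, and define the exponential loss L(θ) = (1/n) Σ_{i=1}^n e^{−g_i(θ)}. Then for every θ ∈ ℝ^m, ⟨−∇L(θ), Λθ⟩ ≥ L(θ) · log((n L(θ))^{−1}). Equivalently, the quantity ν = ⟨dθ/dt, Λθ⟩ = (1/2)(d/dt)‖θ‖_Λ² along the gradient flow dθ/dt = −∇L(θ) satisfies ν ≥ L log((nL)^{−1}). -/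
/-- The quasi-homogeneous scaling map `θ ↦ e^{αΛ}θ`, where `Λ = diag(l)`. -/
noncomputable def qhScale {m : ℕ} (l : Fin m → ℝ) (α : ℝ)
    (θ : EuclideanSpace ℝ (Fin m)) : EuclideanSpace ℝ (Fin m) :=
  WithLp.toLp 2 (fun i => Real.exp (α * l i) * θ i)

/-- The tangent vector `Λθ` of the characteristic curve through `θ`. -/
def qhTangent {m : ℕ} (l : Fin m → ℝ) (θ : EuclideanSpace ℝ (Fin m)) :
    EuclideanSpace ℝ (Fin m) :=
  WithLp.toLp 2 (fun i => l i * θ i)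

/-- The exponential loss `L(θ) = (1/n) Σ_i e^{−g_i(θ)}`. -/
noncomputable def expLoss {m n : ℕ} (g : Fin n → EuclideanSpace ℝ (Fin m) → ℝ)
    (θ : EuclideanSpace ℝ (Fin m)) : ℝ :=
  (1 / n) * ∑ i, Real.exp (-(g i θ))

set_option linter.unusedVariables false

lemma euler {m : ℕ} (l : Fin m → ℝ) (θ : EuclideanSpace ℝ (Fin m))
    (f : EuclideanSpace ℝ (Fin m) → ℝ) (hf : Differentiable ℝ f)
    (hq : ∀ α, f (qhScale l α θ) = Real.exp α * f θ) :
    fderiv ℝ f θ (qhTangent l θ) = f θ := by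
  set e := EuclideanSpace.equiv (Fin m) ℝ
  have hc0 : HasDerivAt (fun α : ℝ => (fun i => Real.exp (α * l i) * θ i : Fin m → ℝ))
      (fun i => l i * θ i) 0 := by
    rw [hasDerivAt_pi]
    intro i
    have h1 : HasDerivAt (fun α : ℝ => α * l i) (l i) 0 := hasDerivAt_mul_const (l i)
    have := (h1.exp).mul_const (θ i)
    simpa using this
  have hc : HasDerivAt (fun α : ℝ => qhScale l α θ) (qhTangent l θ) 0 := by
    have := e.symm.hasFDerivAt.comp_hasDerivAt 0 hc0
    exact (this : _)
  have hθ0 : qhScale l 0 θ = θ := by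
    ext i; simp [qhScale]
  have hfθ : HasFDerivAt f (fderiv ℝ f θ) (qhScale l 0 θ) := by
    rw [hθ0]; exact (hf θ).hasFDerivAt
  have hcomp : HasDerivAt (fun α => f (qhScale l α θ))
      (fderiv ℝ f θ (qhTangent l θ)) 0 := hfθ.comp_hasDerivAt 0 hc
  have hcomp' : HasDerivAt (fun α => f (qhScale l α θ)) (f θ) 0 := by
    have : HasDerivAt (fun α : ℝ => Real.exp α * f θ) (f θ) 0 := by
      simpa using (Real.hasDerivAt_exp 0).mul_const (f θ)
    exact this.congr_of_eventuallyEq (by filter_upwards with α using (hq α))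
  exact hcomp.unique hcomp'

/-- First inequality of Lemma 2: along gradient flow on the exponential loss,
`ν = ⟨−∇L(θ), Λθ⟩ = (1/2) d/dt ‖θ‖_Λ²` satisfies `ν ≥ L log((nL)⁻¹)`. -/
theorem stmt_5 {m n : ℕ} (hn : 0 < n)
    (l : Fin m → ℝ) (hl : ∀ i, 0 ≤ l i) (hl0 : l ≠ 0)
    (g : Fin n → EuclideanSpace ℝ (Fin m) → ℝ)
    (hdiff : ∀ i, Differentiable ℝ (g i))
    (hqh : ∀ i (α : ℝ) (θ : EuclideanSpace ℝ (Fin m)),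
      g i (qhScale l α θ) = Real.exp α * g i θ)
    (θ : EuclideanSpace ℝ (Fin m)) :
    expLoss g θ * Real.log ((n * expLoss g θ)⁻¹) ≤
      inner (𝕜 := ℝ) (-gradient (expLoss g) θ) (qhTangent l θ) := by
  set x : Fin n → ℝ := fun i => Real.exp (-(g i θ)) with hx
  -- Fréchet derivative of expLoss
  set D : EuclideanSpace ℝ (Fin m) →L[ℝ] ℝ :=
    (1 / (n : ℝ)) • ∑ i, x i • (-(fderiv ℝ (g i) θ)) with hDdef
  have hD : HasFDerivAt (expLoss g) D θ := by
    have hsum : HasFDerivAt (fun θ' => ∑ i, Real.exp (-(g i θ')))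
        (∑ i, x i • (-(fderiv ℝ (g i) θ))) θ := by
      apply HasFDerivAt.fun_sum
      intro i _
      exact (((hdiff i θ).hasFDerivAt).neg).exp
    have h2 := hsum.const_smul (1 / (n : ℝ))
    rw [hDdef]
    exact h2
  -- value of D on the tangent vector
  have hEuler : ∀ i, fderiv ℝ (g i) θ (qhTangent l θ) = g i θ :=
    fun i => euler l θ (g i) (hdiff i) (fun α => hqh i α θ)
  have hDval : D (qhTangent l θ) = (1 / (n : ℝ)) * ∑ i, -(x i * g i θ) := by
    simp [hDdef, ContinuousLinearMap.sum_apply, hEuler, mul_comm]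
  -- rewrite the inner product
  have hgrad : inner (𝕜 := ℝ) (-gradient (expLoss g) θ) (qhTangent l θ)
      = (1 / (n : ℝ)) * ∑ i, x i * g i θ := by
    rw [inner_neg_left, gradient, hD.fderiv, InnerProductSpace.toDual_symm_apply, hDval]
    rw [Finset.sum_neg_distrib]
    ring
  rw [hgrad]
  -- the scalar inequality
  have hn' : (0 : ℝ) < n := by exact_mod_cast hn
  have hxpos : ∀ i, 0 < x i := fun i => Real.exp_pos _
  set s : ℝ := ∑ i, x i with hs
  have hspos : 0 < s := Finset.sum_pos (fun i _ => hxpos i) (by simp [Finset.univ_nonempty_iff]; exact Fin.pos_iff_nonempty.mp hn)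
  have hL : expLoss g θ = (1 / (n : ℝ)) * s := rfl
  have hnL : (n : ℝ) * expLoss g θ = s := by
    rw [hL]; field_simp
  have hlog : ∀ i, g i θ = -Real.log (x i) := by
    intro i; rw [hx]; simp [Real.log_exp]
  have key : ∑ i, x i * Real.log (x i) ≤ s * Real.log s := by
    have : ∀ i ∈ Finset.univ, x i * Real.log (x i) ≤ x i * Real.log s := by
      intro i _
      apply mul_le_mul_of_nonneg_left _ (hxpos i).le
      exact Real.log_le_log (hxpos i) (Finset.single_le_sum (fun j _ => (hxpos j).le) (Finset.mem_univ i))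
    calc ∑ i, x i * Real.log (x i) ≤ ∑ i, x i * Real.log s := Finset.sum_le_sum this
      _ = s * Real.log s := by rw [← Finset.sum_mul]
  rw [hnL, hL, Real.log_inv]
  have : ∑ i, x i * g i θ = -∑ i, x i * Real.log (x i) := by
    rw [← Finset.sum_neg_distrib]
    exact Finset.sum_congr rfl fun i _ => by rw [hlog i]; ring
  rw [this]
  have h2 : s * -Real.log s ≤ -∑ i, x i * Real.log (x i) := by linarith [key]
  calc 1 / (n:ℝ) * s * -Real.log s = (1/(n:ℝ)) * (s * -Real.log s) := by ring
    _ ≤ (1/(n:ℝ)) * (-∑ i, x i * Real.log (x i)) := by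
        apply mul_le_mul_of_nonneg_left h2 (by positivity)
end

section
/- Let λ ∈ ℝ^m with λ_i ≥ 0 for all i and λ not identically zero, Λ = diag(λ), λ_max = max_i λ_i. Let g_1,…,g_n : ℝ^m → ℝ be continuously differentiable and Λ-quasi-homogeneous, L(θ) = (1/n) Σ_i e^{−g_i(θ)}, and define the smooth normalized margin γ̃(θ) = log((nL(θ))^{−1}) / ‖θ‖_Λ^{1/λ_max}. Let θ : I → ℝ^m be differentiable with θ'(t) = −∇L(θ(t)). Suppose at some time t we have n L(θ(t)) < 1, ∇L(θ(t)) ≠ 0 and ‖Λθ(t)‖ > 0, and let β(t) = ⟨Λθ(t), θ'(t)⟩ / (‖Λθ(t)‖·‖θ'(t)‖) denote the cosine similarity between the velocity and the tangent vector Λθ. Then (d/dt) log γ̃(θ(t)) ≥ λ_max^{−1} · ((d/dt) log ‖θ(t)‖_Λ) · (β(t)^{−2} − 1). -/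
/-- The `Λ`-seminorm `‖θ‖_Λ = sqrt (Σ_i λ_i θ_i²)`. -/
noncomputable def qhNorm {m : ℕ} (l : Fin m → ℝ)
    (θ : EuclideanSpace ℝ (Fin m)) : ℝ :=
  Real.sqrt (∑ i, l i * θ i ^ 2)

/-- The smooth normalized margin `γ̃(θ) = log((nL(θ))⁻¹) / ‖θ‖_Λ^{1/λmax}`. -/
noncomputable def smoothMargin {m n : ℕ} (l : Fin m → ℝ) (lmax : ℝ)
    (g : Fin n → EuclideanSpace ℝ (Fin m) → ℝ)
    (θ : EuclideanSpace ℝ (Fin m)) : ℝ :=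
  Real.log ((n * expLoss g θ)⁻¹) / qhNorm l θ ^ (1 / lmax)

lemma qhScale_hasDerivAt {m : ℕ} (l : Fin m → ℝ) (θ : EuclideanSpace ℝ (Fin m)) :
    HasDerivAt (fun α => qhScale l α θ) (qhTangent l θ) 0 := by
  have h0 : ∀ i, HasDerivAt (fun α : ℝ => Real.exp (α * l i) * θ i) (l i * θ i) 0 := by
    intro i
    have := (((hasDerivAt_id (0 : ℝ)).mul_const (l i)).exp.mul_const (θ i))
    simpa using this
  have hc0 : HasDerivAt (fun α : ℝ => (fun i => Real.exp (α * l i) * θ i : Fin m → ℝ))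
      (fun i => l i * θ i : Fin m → ℝ) 0 := hasDerivAt_pi.2 h0
  have h2 := (((PiLp.continuousLinearEquiv 2 ℝ (fun _ : Fin m => ℝ)).symm :
      (Fin m → ℝ) ≃L[ℝ] EuclideanSpace ℝ (Fin m)) :
      (Fin m → ℝ) →L[ℝ] EuclideanSpace ℝ (Fin m)).hasFDerivAt.comp_hasDerivAt 0 hc0
  simpa [Function.comp_def, qhScale, qhTangent] using h2

lemma euler_identity {m : ℕ} (l : Fin m → ℝ) (f : EuclideanSpace ℝ (Fin m) → ℝ)
    (hf : ContDiff ℝ 1 f)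
    (hqh : ∀ (α : ℝ) (θ : EuclideanSpace ℝ (Fin m)), f (qhScale l α θ) = Real.exp α * f θ)
    (θ : EuclideanSpace ℝ (Fin m)) :
    fderiv ℝ f θ (qhTangent l θ) = f θ := by
  have hc : HasDerivAt (fun α => qhScale l α θ) (qhTangent l θ) 0 := qhScale_hasDerivAt l θ
  have h0 : qhScale l 0 θ = θ := by ext i; simp [qhScale]
  have hd : HasFDerivAt f (fderiv ℝ f θ) ((fun α => qhScale l α θ) 0) := by
    simp only [h0]; exact (hf.differentiable one_ne_zero θ).hasFDerivAt
  have h1 : HasDerivAt (fun α => f (qhScale l α θ)) (fderiv ℝ f θ (qhTangent l θ)) 0 :=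
    hd.comp_hasDerivAt 0 hc
  have h3 : HasDerivAt (fun α => f (qhScale l α θ)) (f θ) 0 := by
    have heq : (fun α => f (qhScale l α θ)) = fun α : ℝ => Real.exp α * f θ := by
      funext α; exact hqh α θ
    rw [heq]
    simpa using (Real.hasDerivAt_exp 0).mul_const (f θ)
  exact h1.unique h3

lemma gradient_inner_eq {F : Type*} [NormedAddCommGroup F] [InnerProductSpace ℝ F]
    [CompleteSpace F] (f : F → ℝ) {D : F →L[ℝ] ℝ} {x : F} (h : HasFDerivAt f D x) (w : F) :
    inner (𝕜 := ℝ) (gradient f x) w = D w := by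
  rw [gradient, h.fderiv]
  exact InnerProductSpace.toDual_symm_apply

lemma expLoss_hasFDerivAt {m n : ℕ} (g : Fin n → EuclideanSpace ℝ (Fin m) → ℝ)
    (hsmooth : ∀ i, ContDiff ℝ 1 (g i)) (x : EuclideanSpace ℝ (Fin m)) :
    HasFDerivAt (expLoss g)
      ((1 / (n : ℝ)) • ∑ i, Real.exp (-(g i x)) • (-(fderiv ℝ (g i) x))) x := by
  have h : ∀ i ∈ Finset.univ, HasFDerivAt (fun y => Real.exp (-(g i y)))
      (Real.exp (-(g i x)) • (-(fderiv ℝ (g i) x))) x := fun i _ =>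
    (((hsmooth i).differentiable one_ne_zero x).hasFDerivAt.neg).exp
  exact (HasFDerivAt.fun_sum h).const_mul ((1 : ℝ) / n)

set_option maxHeartbeats 2000000 in
/-- Second inequality of Lemma 2 (smooth setting): along the gradient flow of
the exponential loss, `d/dt log γ̃ ≥ λ_max⁻¹ (d/dt log ‖θ‖_Λ) (β⁻² − 1)`,
where `β` is the cosine similarity between the velocity and the tangent `Λθ`. -/
theorem stmt_6 {m n : ℕ} (hn : 0 < n)
    (l : Fin m → ℝ) (hl : ∀ i, 0 ≤ l i) (hl0 : l ≠ 0)
    (lmax : ℝ) (hlmax : IsGreatest (Set.range l) lmax)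
    (g : Fin n → EuclideanSpace ℝ (Fin m) → ℝ)
    (hsmooth : ∀ i, ContDiff ℝ 1 (g i))
    (hqh : ∀ i (α : ℝ) (θ : EuclideanSpace ℝ (Fin m)),
      g i (qhScale l α θ) = Real.exp α * g i θ)
    (θ : ℝ → EuclideanSpace ℝ (Fin m))
    (hflow : ∀ t, HasDerivAt θ (-gradient (expLoss g) (θ t)) t)
    (t : ℝ)
    (hsep : n * expLoss g (θ t) < 1)
    (hgrad : gradient (expLoss g) (θ t) ≠ 0)
    (hΛθ : 0 < ‖qhTangent l (θ t)‖)
    (β : ℝ)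
    (hβ : β = inner (𝕜 := ℝ) (qhTangent l (θ t)) (-gradient (expLoss g) (θ t)) /
      (‖qhTangent l (θ t)‖ * ‖-gradient (expLoss g) (θ t)‖)) :
    ∃ r s : ℝ,
      HasDerivAt (fun u => Real.log (smoothMargin l lmax g (θ u))) r t ∧
      HasDerivAt (fun u => Real.log (qhNorm l (θ u))) s t ∧
      lmax⁻¹ * s * (β⁻¹ ^ 2 - 1) ≤ r := by
  -- basic positivity facts
  obtain ⟨i₀, hi₀⟩ : ∃ i, l i ≠ 0 := Function.ne_iff.1 hl0
  have hlmax_pos : 0 < lmax :=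
    lt_of_lt_of_le ((hl i₀).lt_of_ne (Ne.symm hi₀)) (hlmax.2 ⟨i₀, rfl⟩)
  haveI : Nonempty (Fin n) := Fin.pos_iff_nonempty.1 hn
  have hn' : (n : ℝ) ≠ 0 := Nat.cast_ne_zero.2 hn.ne'
  have hnpos : (0 : ℝ) < n := Nat.cast_pos.2 hn
  set x := θ t with hx
  set G := gradient (expLoss g) x with hGdef
  set v := -G with hvdef
  set W := ‖G‖ with hWdef
  have hW : 0 < W := norm_pos_iff.2 hgrad
  -- the Fréchet derivative of the loss at x
  set D := ((1 / (n : ℝ)) • ∑ i, Real.exp (-(g i x)) • (-(fderiv ℝ (g i) x))) with hDdef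
  have hD : HasFDerivAt (expLoss g) D x := expLoss_hasFDerivAt g hsmooth x
  have hDinner : ∀ w, inner (𝕜 := ℝ) G w = D w := gradient_inner_eq _ hD
  -- S and K
  set S := ∑ i, Real.exp (-(g i x)) with hSdef
  have hSpos : 0 < S := Finset.sum_pos (fun i _ => Real.exp_pos _) Finset.univ_nonempty
  have hnES : (n : ℝ) * expLoss g x = S := by
    rw [expLoss]; field_simp; rfl
  have hS1 : S < 1 := by rw [← hnES]; exact hsep
  set K := -Real.log S with hKdef
  have hKpos : 0 < K := by
    have := Real.log_neg hSpos hS1; simp only [hKdef]; linarith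
  -- Q
  set Q := ∑ i, l i * (x i) ^ 2 with hQdef
  have hQnonneg : ∀ i ∈ Finset.univ, (0 : ℝ) ≤ l i * x i ^ 2 :=
    fun i _ => mul_nonneg (hl i) (sq_nonneg _)
  have hQpos : 0 < Q := by
    have hne : qhTangent l x ≠ 0 := by
      intro h; rw [h] at hΛθ; simp at hΛθ
    obtain ⟨j, hj⟩ : ∃ j, l j * x j ≠ 0 := by
      by_contra h; push_neg at h
      exact hne (by ext j; simpa [qhTangent] using h j)
    obtain ⟨hlj, hxj⟩ := mul_ne_zero_iff.1 hj
    refine Finset.sum_pos' hQnonneg ⟨j, Finset.mem_univ j, ?_⟩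
    have : (0:ℝ) < x j ^ 2 := by positivity
    exact mul_pos ((hl j).lt_of_ne (Ne.symm hlj)) this
  -- T
  set T := ‖qhTangent l x‖ with hTdef
  have hTpos : 0 < T := hΛθ
  have hT2 : T ^ 2 = ∑ i, (l i * x i) ^ 2 := by
    rw [hTdef, EuclideanSpace.norm_eq, Real.sq_sqrt (by positivity)]
    refine Finset.sum_congr rfl fun i _ => ?_
    simp only [Real.norm_eq_abs, sq_abs]
    simp [qhTangent]
  have hT2le : T ^ 2 ≤ lmax * Q := by
    rw [hT2, hQdef, Finset.mul_sum]
    refine Finset.sum_le_sum fun i _ => ?_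
    have h1 : l i ≤ lmax := hlmax.2 ⟨i, rfl⟩
    have h2 := hl i
    nlinarith [mul_nonneg (mul_nonneg (sub_nonneg.2 h1) h2) (sq_nonneg (x i))]
  -- Euler identity for each gᵢ
  have hfd : ∀ i, fderiv ℝ (g i) x (qhTangent l x) = g i x := fun i =>
    euler_identity l (g i) (hsmooth i) (hqh i) x
  -- P = ⟨Λθ, v⟩
  set P := inner (𝕜 := ℝ) (qhTangent l x) v with hPdef
  have hDT : D (qhTangent l x) = (1 / n) * ∑ i, Real.exp (-(g i x)) * (-(g i x)) := by
    rw [hDdef]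
    simp [ContinuousLinearMap.sum_apply, hfd]
  have hPval : (n : ℝ) * P = ∑ i, Real.exp (-(g i x)) * g i x := by
    have h1 : P = -D (qhTangent l x) := by
      rw [hPdef, hvdef, real_inner_comm, inner_neg_left, hDinner]
    have hsum : ∑ i, Real.exp (-(g i x)) * -(g i x) = -∑ i, Real.exp (-(g i x)) * g i x := by
      simp [mul_neg]
    rw [h1, hDT, hsum]
    field_simp
  have hSK : S * K ≤ (n : ℝ) * P := by
    rw [hPval, hSdef, Finset.sum_mul]
    refine Finset.sum_le_sum fun i _ => ?_
    have hxle : Real.exp (-(g i x)) ≤ S :=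
      Finset.single_le_sum (f := fun i => Real.exp (-(g i x)))
        (fun i _ => (Real.exp_pos _).le) (Finset.mem_univ i)
    have hlog : Real.log (Real.exp (-(g i x))) ≤ Real.log S :=
      Real.log_le_log (Real.exp_pos _) hxle
    rw [Real.log_exp] at hlog
    have hKle : K ≤ g i x := by rw [hKdef]; linarith
    exact mul_le_mul_of_nonneg_left hKle (Real.exp_pos _).le
  have hPpos : 0 < P := by
    have h1 : 0 < (n : ℝ) * P := lt_of_lt_of_le (mul_pos hSpos hKpos) hSK
    have h2 := div_pos h1 hnpos
    rwa [mul_div_cancel_left₀ _ hn'] at h2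
  -- derivative of the loss along the flow
  have hDv : D v = -(W ^ 2) := by
    rw [← hDinner, hvdef, inner_neg_right, real_inner_self_eq_norm_sq]
  have hE : HasDerivAt (fun u => expLoss g (θ u)) (D v) t :=
    hD.comp_hasDerivAt t (hflow t)
  have h1 : HasDerivAt (fun u => (n : ℝ) * expLoss g (θ u)) ((n : ℝ) * D v) t :=
    hE.const_mul (n : ℝ)
  have h2 : HasDerivAt (fun u => Real.log ((n : ℝ) * expLoss g (θ u)))
      ((n : ℝ) * D v / S) t := by
    have := h1.log (by rw [hnES]; exact hSpos.ne')
    rwa [hnES] at this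
  have h4 : HasDerivAt (fun u => Real.log (-Real.log ((n : ℝ) * expLoss g (θ u))))
      ((-(((n : ℝ)) * D v / S)) / K) t := by
    have h3 := h2.neg
    have := h3.log (x := t) (by simp only [Pi.neg_apply, ← hx, hnES, ← hKdef]; exact hKpos.ne')
    simpa only [Pi.neg_apply, ← hx, hnES, ← hKdef] using this
  -- coordinate derivatives and derivative of log ‖θ‖_Λ
  have hθi : ∀ i, HasDerivAt (fun u => θ u i) (v i) t := by
    intro i
    exact (EuclideanSpace.proj (𝕜 := ℝ) i).hasFDerivAt.comp_hasDerivAt t (hflow t)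
  have hPexp : P = ∑ i, (l i * x i) * v i := by
    rw [hPdef]
    simp [PiLp.inner_apply, RCLike.inner_apply, qhTangent]
    exact Finset.sum_congr rfl fun i _ => by ring
  have hQd : HasDerivAt (fun u => ∑ i, l i * θ u i ^ 2) (2 * P) t := by
    have := HasDerivAt.fun_sum (u := Finset.univ)
      (fun i _ => ((hθi i).pow 2).const_mul (l i))
    refine this.congr_deriv ?_
    rw [hPexp, Finset.mul_sum]
    refine Finset.sum_congr rfl fun i _ => ?_
    push_cast
    ring
  have hsqrt : HasDerivAt (fun u => Real.sqrt (∑ i, l i * θ u i ^ 2))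
      (2 * P / (2 * Real.sqrt Q)) t := hQd.sqrt hQpos.ne'
  have hlogN : HasDerivAt (fun u => Real.log (qhNorm l (θ u))) (P / Q) t := by
    have hsq : Real.sqrt Q ≠ 0 := (Real.sqrt_pos.2 hQpos).ne'
    have := hsqrt.log hsq
    have hval : 2 * P / (2 * Real.sqrt Q) / Real.sqrt Q = P / Q := by
      rw [div_div, mul_assoc, Real.mul_self_sqrt hQpos.le]
      exact mul_div_mul_left P Q two_ne_zero
    rw [hval] at this
    exact this
  -- eventual equality of log(margin)
  have hft1 : (0 : ℝ) < (n : ℝ) * expLoss g (θ t) := by rw [← hx, hnES]; exact hSpos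
  have hft2 : (n : ℝ) * expLoss g (θ t) < 1 := by rw [← hx, hnES]; exact hS1
  have ev1 : ∀ᶠ u in nhds t, 0 < (n : ℝ) * expLoss g (θ u) :=
    h1.continuousAt.eventually (eventually_gt_nhds hft1)
  have ev2 : ∀ᶠ u in nhds t, (n : ℝ) * expLoss g (θ u) < 1 :=
    h1.continuousAt.eventually (eventually_lt_nhds hft2)
  have evQ : ∀ᶠ u in nhds t, 0 < ∑ i, l i * θ u i ^ 2 :=
    hQd.continuousAt.eventually (eventually_gt_nhds hQpos)
  have heq : (fun u => Real.log (smoothMargin l lmax g (θ u))) =ᶠ[nhds t]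
      fun u => Real.log (-Real.log ((n : ℝ) * expLoss g (θ u))) -
        (1 / lmax) * Real.log (qhNorm l (θ u)) := by
    filter_upwards [ev1, ev2, evQ] with u hu1 hu2 huQ
    have hof : 0 < qhNorm l (θ u) := Real.sqrt_pos.2 huQ
    have hA : 0 < -Real.log ((n : ℝ) * expLoss g (θ u)) := by
      have := Real.log_neg hu1 hu2; linarith
    rw [smoothMargin, Real.log_inv,
      Real.log_div hA.ne' (Real.rpow_pos_of_pos hof _).ne',
      Real.log_rpow hof]
  have hr : HasDerivAt (fun u => Real.log (smoothMargin l lmax g (θ u)))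
      ((-(((n : ℝ)) * D v / S)) / K - (1 / lmax) * (P / Q)) t :=
    (h4.sub (hlogN.const_mul (1 / lmax))).congr_of_eventuallyEq heq
  refine ⟨_, _, hr, hlogN, ?_⟩
  -- final inequality
  have hβval : β⁻¹ = T * W / P := by
    rw [hβ, hvdef, norm_neg, ← hWdef, inv_div]
  rw [hDv, hβval]
  clear hr hlogN heq ev1 ev2 evQ hft1 hft2 h1 h2 h4 hQd hsqrt hθi hE hDv hDT hPval
    hDinner hD hfd hnES hQnonneg hPexp hT2 hsep hgrad hflow hqh hsmooth hβ hβval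
  clear_value P T Q K S W v G x D
  clear hDdef hGdef hvdef hWdef hSdef hKdef hQdef hTdef hPdef hx v G x D
  have hDvval : -(((n : ℝ)) * -(W ^ 2) / S) / K = (n : ℝ) * W ^ 2 / (S * K) := by
    ring
  rw [hDvval]
  have key : lmax⁻¹ * (P / Q) * (T * W / P) ^ 2 ≤ (n : ℝ) * W ^ 2 / (S * K) := by
    have e1 : lmax⁻¹ * (P / Q) * (T * W / P) ^ 2 = T ^ 2 * W ^ 2 / (lmax * Q * P) := by
      field_simp
    have c1 : T ^ 2 * W ^ 2 / (lmax * Q * P) ≤ lmax * Q * W ^ 2 / (lmax * Q * P) := by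
      gcongr
    have c2 : lmax * Q * W ^ 2 / (lmax * Q * P) = W ^ 2 / P :=
      mul_div_mul_left _ _ (by positivity)
    have c3 : W ^ 2 / P ≤ (n : ℝ) * W ^ 2 / (S * K) := by
      rw [div_le_div_iff₀ hPpos (by positivity)]
      nlinarith [mul_le_mul_of_nonneg_left hSK (sq_nonneg W)]
    calc lmax⁻¹ * (P / Q) * (T * W / P) ^ 2 = T ^ 2 * W ^ 2 / (lmax * Q * P) := e1
      _ ≤ lmax * Q * W ^ 2 / (lmax * Q * P) := c1
      _ = W ^ 2 / P := c2
      _ ≤ (n : ℝ) * W ^ 2 / (S * K) := c3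
  have expand : lmax⁻¹ * (P / Q) * ((T * W / P) ^ 2 - 1) =
      lmax⁻¹ * (P / Q) * (T * W / P) ^ 2 - 1 / lmax * (P / Q) := by
    rw [inv_eq_one_div]; ring
  rw [expand]
  linarith [key]
end

section
/- Let λ ∈ ℝ^m with λ_i ≥ 0 for all i and λ not identically zero, Λ = diag(λ), λ_max = max_i λ_i. Let g_1,…,g_n : ℝ^m → ℝ be continuously differentiable and Λ-quasi-homogeneous, L(θ) = (1/n) Σ_i e^{−g_i(θ)}, and γ̃(θ) = log((nL(θ))^{−1}) / ‖θ‖_Λ^{1/λ_max}. Let θ : [t_0, ∞) → ℝ^m be a differentiable solution of the gradient flow θ'(t) = −∇L(θ(t)) with L(θ(t_0)) < 1/n. Then t ↦ γ̃(θ(t)) is non-decreasing for t ≥ t_0. -/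
open Real Finset RealInnerProductSpace

lemma qhScale_zero' {m : ℕ} (l : Fin m → ℝ) (θ : EuclideanSpace ℝ (Fin m)) :
    qhScale l 0 θ = θ := by
  ext i; simp [qhScale]

lemma hasDerivAt_qhScale' {m : ℕ} (l : Fin m → ℝ) (θ : EuclideanSpace ℝ (Fin m)) :
    HasDerivAt (fun α => qhScale l α θ)
      ((WithLp.toLp 2 (fun j => l j * θ j) : EuclideanSpace ℝ (Fin m))) 0 := by
  have h1 : HasDerivAt (fun α : ℝ => (fun j => Real.exp (α * l j) * θ j : Fin m → ℝ))
      (fun j => l j * θ j) 0 := by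
    rw [hasDerivAt_pi]
    intro j
    have := ((hasDerivAt_mul_const (l j) (x := (0:ℝ))).exp).mul_const (θ j)
    simpa using this
  exact (((EuclideanSpace.equiv (Fin m) ℝ).symm :
      (Fin m → ℝ) →L[ℝ] EuclideanSpace ℝ (Fin m)).hasFDerivAt.comp_hasDerivAt 0 h1)

lemma euler_fderiv' {m : ℕ} (l : Fin m → ℝ) (f : EuclideanSpace ℝ (Fin m) → ℝ)
    (hf : ContDiff ℝ 1 f)
    (hqh : ∀ (α : ℝ) θ, f (qhScale l α θ) = Real.exp α * f θ)
    (θ : EuclideanSpace ℝ (Fin m)) :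
    fderiv ℝ f θ (WithLp.toLp 2 (fun j => l j * θ j) : EuclideanSpace ℝ (Fin m)) = f θ := by
  have hd : HasDerivAt (fun α => f (qhScale l α θ))
      (fderiv ℝ f θ (WithLp.toLp 2 (fun j => l j * θ j) : EuclideanSpace ℝ (Fin m))) 0 :=
    ((hf.differentiable one_ne_zero θ).hasFDerivAt).comp_hasDerivAt_of_eq 0
      (hasDerivAt_qhScale' l θ) (qhScale_zero' l θ).symm
  have hd2 : HasDerivAt (fun α : ℝ => Real.exp α * f θ) (f θ) 0 := by
    simpa using (Real.hasDerivAt_exp 0).mul_const (f θ)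
  have heq : (fun α => f (qhScale l α θ)) = fun α : ℝ => Real.exp α * f θ := by
    funext α; exact hqh α θ
  rw [heq] at hd
  exact hd.unique hd2

lemma hasFDerivAt_expLoss' {m n : ℕ} (g : Fin n → EuclideanSpace ℝ (Fin m) → ℝ)
    (hs : ∀ i, ContDiff ℝ 1 (g i)) (p : EuclideanSpace ℝ (Fin m)) :
    HasFDerivAt (expLoss g)
      ((1 / (n:ℝ)) • ∑ i, (-Real.exp (-(g i p))) • fderiv ℝ (g i) p) p := by
  have h1 : ∀ i ∈ Finset.univ, HasFDerivAt (fun θ => Real.exp (-(g i θ)))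
      ((-Real.exp (-(g i p))) • fderiv ℝ (g i) p) p := by
    intro i _
    have := (((hs i).differentiable one_ne_zero p).hasFDerivAt).neg.exp
    simpa [neg_smul, smul_neg] using this
  exact (HasFDerivAt.fun_sum h1).const_smul (1 / (n:ℝ))

lemma sum_mul_log_le' {n : ℕ} (x : Fin n → ℝ) (hx : ∀ i, 0 < x i) :
    ∑ i, x i * Real.log (x i) ≤ (∑ i, x i) * Real.log (∑ i, x i) := by
  have hS : ∀ i, x i ≤ ∑ j, x j := fun i =>
    Finset.single_le_sum (fun j _ => (hx j).le) (mem_univ i)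
  calc ∑ i, x i * Real.log (x i) ≤ ∑ i, x i * Real.log (∑ j, x j) := by
        apply Finset.sum_le_sum; intro i _
        exact mul_le_mul_of_nonneg_left (Real.log_le_log (hx i) (hS i)) (hx i).le
    _ = _ := by rw [← Finset.sum_mul]

set_option maxHeartbeats 1000000 in
/-- Monotonicity of the smooth normalized margin: once the exponential loss of
the gradient-flow trajectory drops below `1/n`, `t ↦ γ̃(θ(t))` is
non-decreasing. -/
theorem stmt_7 {m n : ℕ} (hn : 0 < n)
    (l : Fin m → ℝ) (hl : ∀ i, 0 ≤ l i) (hl0 : l ≠ 0)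
    (lmax : ℝ) (hlmax : IsGreatest (Set.range l) lmax)
    (g : Fin n → EuclideanSpace ℝ (Fin m) → ℝ)
    (hsmooth : ∀ i, ContDiff ℝ 1 (g i))
    (hqh : ∀ i (α : ℝ) (θ : EuclideanSpace ℝ (Fin m)),
      g i (qhScale l α θ) = Real.exp α * g i θ)
    (θ : ℝ → EuclideanSpace ℝ (Fin m)) (t₀ : ℝ)
    (hflow : ∀ t, t₀ ≤ t → HasDerivAt θ (-gradient (expLoss g) (θ t)) t)
    (hsep : expLoss g (θ t₀) < 1 / n) :
    MonotoneOn (fun t => smoothMargin l lmax g (θ t)) (Set.Ici t₀) := by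
  classical
  haveI : Nonempty (Fin n) := ⟨⟨0, hn⟩⟩
  have hn' : (0:ℝ) < n := by exact_mod_cast hn
  obtain ⟨i₀, hi₀⟩ : ∃ i, l i ≠ 0 := by
    by_contra h; push_neg at h; exact hl0 (funext h)
  have hlmax_pos : 0 < lmax :=
    lt_of_lt_of_le (lt_of_le_of_ne (hl i₀) (Ne.symm hi₀)) (hlmax.2 ⟨i₀, rfl⟩)
  -- abbreviations
  set Lf : EuclideanSpace ℝ (Fin m) → ℝ := expLoss g with hLfdef
  have hdiff : ∀ p, HasFDerivAt Lf
      ((1 / (n:ℝ)) • ∑ i, (-Real.exp (-(g i p))) • fderiv ℝ (g i) p) p :=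
    hasFDerivAt_expLoss' g hsmooth
  -- gradient/fderiv bridge
  have hgradrel : ∀ p (u : EuclideanSpace ℝ (Fin m)),
      fderiv ℝ Lf p u = ⟪gradient Lf p, u⟫ := by
    intro p u
    have h1 : HasGradientAt Lf (gradient Lf p) p :=
      (hdiff p).differentiableAt.hasGradientAt
    rw [h1.hasFDerivAt.fderiv]
    exact InnerProductSpace.toDual_apply_apply
  have hDval : ∀ p (u : EuclideanSpace ℝ (Fin m)), fderiv ℝ Lf p u =
      (1/(n:ℝ)) * ∑ i, (-Real.exp (-(g i p))) * (fderiv ℝ (g i) p u) := by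
    intro p u
    rw [(hdiff p).fderiv]
    simp [ContinuousLinearMap.sum_apply, smul_eq_mul]
  -- data along the trajectory
  set w : ℝ → EuclideanSpace ℝ (Fin m) := fun t => gradient Lf (θ t) with hwdef
  set Lθ : ℝ → ℝ := fun t => Lf (θ t) with hLθdef
  set S : ℝ → ℝ := fun t => ∑ i, Real.exp (-(g i (θ t))) with hSdef
  set W : ℝ → ℝ := fun t => ∑ j, (w t j)^2 with hWdef
  set Q : ℝ → ℝ := fun t => ∑ j, l j * (θ t j)^2 with hQdef
  set A : ℝ → ℝ := fun t => (1/(n:ℝ)) * ∑ i, Real.exp (-(g i (θ t))) * g i (θ t)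
    with hAdef
  set F : ℝ → ℝ := fun t => Real.log (((n:ℝ) * Lθ t)⁻¹) with hFdef
  set c : ℝ := 1/2 * (1/lmax) with hcdef
  -- basic positivity
  have hSpos : ∀ t, 0 < S t := fun t =>
    Finset.sum_pos (fun i _ => Real.exp_pos _) Finset.univ_nonempty
  have hLS : ∀ t, Lθ t = (1/(n:ℝ)) * S t := fun t => rfl
  have hLpos : ∀ t, 0 < Lθ t := fun t => by
    rw [hLS]; positivity
  have hWnn : ∀ t, 0 ≤ W t := fun t => Finset.sum_nonneg fun j _ => sq_nonneg _
  have hQnn : ∀ t, 0 ≤ Q t := fun t =>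
    Finset.sum_nonneg fun j _ => mul_nonneg (hl j) (sq_nonneg _)
  -- derivative of the loss along the flow
  have hLθ' : ∀ t, t₀ ≤ t → HasDerivAt Lθ (-(W t)) t := by
    intro t ht
    have h1 := (hdiff (θ t)).comp_hasDerivAt t (hflow t ht)
    have h2 : ((1 / (n:ℝ)) • ∑ i, (-Real.exp (-(g i (θ t)))) • fderiv ℝ (g i) (θ t))
        (-gradient Lf (θ t)) = -(W t) := by
      rw [← (hdiff (θ t)).fderiv, hgradrel]
      simp [hWdef, PiLp.inner_apply, RCLike.inner_apply, conj_trivial, PiLp.neg_apply,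
        mul_neg, Finset.sum_neg_distrib, pow_two]
      rw [← real_inner_self_eq_norm_mul_norm]
      simp only [PiLp.inner_apply, RCLike.inner_apply, conj_trivial]
      rfl
    rw [h2] at h1
    exact h1
  -- loss is antitone on [t₀, ∞)
  have hanti : AntitoneOn Lθ (Set.Ici t₀) := by
    apply antitoneOn_of_hasDerivWithinAt_nonpos (convex_Ici t₀)
      (f' := fun t => -(W t))
    · intro t ht
      exact ((hLθ' t ht).continuousAt).continuousWithinAt
    · intro t ht
      rw [interior_Ici] at ht
      exact (hLθ' t (le_of_lt ht)).hasDerivWithinAt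
    · intro t ht
      exact neg_nonpos.mpr (hWnn t)
  have hSlt1 : ∀ t, t ∈ Set.Ici t₀ → S t < 1 := by
    intro t ht
    have h1 : Lθ t ≤ Lθ t₀ := hanti (Set.self_mem_Ici) ht ht
    have h2 : Lθ t < 1 / n := lt_of_le_of_lt h1 hsep
    have := (mul_lt_mul_iff_right₀ hn').mpr h2
    rw [hLS] at this
    calc S t = (n:ℝ) * ((1/(n:ℝ)) * S t) := by field_simp
      _ < (n:ℝ) * (1/(n:ℝ)) := this
      _ = 1 := by field_simp
  have hFeq : ∀ t, F t = -Real.log (S t) := by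
    intro t
    rw [hFdef]
    simp only [hLS]
    rw [Real.log_inv]
    congr 2
    field_simp
  have hFpos : ∀ t, t ∈ Set.Ici t₀ → 0 < F t := by
    intro t ht
    rw [hFeq]
    simpa using Real.log_neg (hSpos t) (hSlt1 t ht)
  -- positivity of Q on the trajectory
  have hQpos : ∀ t, t ∈ Set.Ici t₀ → 0 < Q t := by
    intro t ht
    rcases lt_or_eq_of_le (hQnn t) with h | h
    · exact h
    · exfalso
      have hz : ∀ j ∈ Finset.univ, l j * (θ t j)^2 = 0 := by
        intro j hj
        exact (Finset.sum_eq_zero_iff_of_nonneg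
          (fun j _ => mul_nonneg (hl j) (sq_nonneg _))).mp h.symm j hj
      have hfix : qhScale l 1 (θ t) = θ t := by
        ext j
        rcases eq_or_ne (l j) 0 with h0 | h0
        · simp [qhScale, h0]
        · have h1 : θ t j = 0 := by
            have := hz j (mem_univ j)
            rcases mul_eq_zero.mp this with h2 | h2
            · exact absurd h2 h0
            · exact (pow_eq_zero_iff two_ne_zero).mp h2
          simp [qhScale, h1]
      have hg0 : ∀ i, g i (θ t) = 0 := by
        intro i
        have h1 := hqh i 1 (θ t)
        rw [hfix] at h1
        have he : (1:ℝ) < Real.exp 1 := by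
          have := Real.add_one_lt_exp (x := (1:ℝ)) (by norm_num)
          linarith
        nlinarith [h1, he]
      have hS1 : S t = n := by
        rw [hSdef]
        simp [hg0]
      have h2 : S t < 1 := hSlt1 t ht
      rw [hS1] at h2
      have h3 : (1:ℝ) ≤ n := by exact_mod_cast hn
      linarith
    -- Euler pairing: ⟨w, Λθ⟩ = -A
  have hAr : ∀ t, A t = (1/(n:ℝ)) * ∑ i, Real.exp (-(g i (θ t))) * g i (θ t) :=
    fun t => rfl
  have hAeq : ∀ t, ∑ j, (w t j) * (l j * θ t j) = -A t := by
    intro t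
    have h1 : fderiv ℝ Lf (θ t) (WithLp.toLp 2 (fun j => l j * θ t j) : EuclideanSpace ℝ (Fin m))
        = ∑ j, (w t j) * (l j * θ t j) := by
      rw [hgradrel]
      show ⟪w t, (WithLp.toLp 2 (fun j => l j * θ t j) : EuclideanSpace ℝ (Fin m))⟫ = _
      simp [PiLp.inner_apply, RCLike.inner_apply, conj_trivial]
      exact Finset.sum_congr rfl (fun j _ => by ring)
    rw [← h1, hDval, hAr]
    have h2 : ∀ i, fderiv ℝ (g i) (θ t)
        (WithLp.toLp 2 (fun j => l j * θ t j) : EuclideanSpace ℝ (Fin m)) = g i (θ t) :=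
      fun i => euler_fderiv' l (g i) (hsmooth i) (hqh i) (θ t)
    have h3 : (∑ i, (-Real.exp (-(g i (θ t)))) *
        (fderiv ℝ (g i) (θ t) (WithLp.toLp 2 (fun j => l j * θ t j) : EuclideanSpace ℝ (Fin m))))
        = -∑ i, Real.exp (-(g i (θ t))) * g i (θ t) := by
      rw [← Finset.sum_neg_distrib]
      apply Finset.sum_congr rfl
      intro i _
      rw [h2 i]
      ring
    rw [h3]
    ring
  -- coordinates of the flow
  have hcoord : ∀ (j : Fin m) t, t₀ ≤ t →
      HasDerivAt (fun s => θ s j) (-(w t j)) t := by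
    intro j t ht
    have h1 := (EuclideanSpace.proj (𝕜 := ℝ) j).hasFDerivAt.comp_hasDerivAt t (hflow t ht)
    simp [PiLp.proj_apply, PiLp.neg_apply] at h1
    exact h1
  -- derivative of Q
  have hQ' : ∀ t, t₀ ≤ t → HasDerivAt Q (2 * A t) t := by
    intro t ht
    have h1 : HasDerivAt (fun s => ∑ j, l j * (θ s j)^2)
        (∑ j, l j * (((2:ℕ):ℝ) * (θ t j)^(2-1) * (-(w t j)))) t := by
      apply HasDerivAt.fun_sum
      intro j _
      exact ((hcoord j t ht).pow 2).const_mul (l j)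
    have h2 : (∑ j, l j * (((2:ℕ):ℝ) * (θ t j)^(2-1) * (-(w t j)))) = 2 * A t := by
      have h3 : (∑ j, l j * (((2:ℕ):ℝ) * (θ t j)^(2-1) * (-(w t j))))
          = (-2) * ∑ j, (w t j) * (l j * θ t j) := by
        rw [Finset.mul_sum]
        apply Finset.sum_congr rfl
        intro j _
        push_cast
        ring
      rw [h3, hAeq t]
      ring
    rw [h2] at h1
    exact h1
  -- derivative of F
  have hF' : ∀ t, t₀ ≤ t → HasDerivAt F (W t / Lθ t) t := by
    intro t ht
    have h1 : HasDerivAt (fun s => (n:ℝ) * Lθ s) ((n:ℝ) * -(W t)) t :=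
      (hLθ' t ht).const_mul (n:ℝ)
    have h2 := (h1.log (mul_pos hn' (hLpos t)).ne').neg
    have h3 : F = fun s => -Real.log ((n:ℝ) * Lθ s) := by
      funext s
      show Real.log (((n:ℝ) * Lθ s)⁻¹) = -Real.log ((n:ℝ) * Lθ s)
      rw [Real.log_inv]
    rw [h3]
    exact h2.congr_deriv (by rw [mul_div_mul_left _ _ hn'.ne', neg_div, neg_neg])
  -- entropy inequality
  have hEnt : ∀ t, t ∈ Set.Ici t₀ → Lθ t * F t ≤ A t := by
    intro t ht
    have h1 : ∑ i, Real.exp (-(g i (θ t))) * Real.log (Real.exp (-(g i (θ t))))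
        ≤ S t * Real.log (S t) :=
      sum_mul_log_le' (fun i => Real.exp (-(g i (θ t)))) (fun i => Real.exp_pos _)
    simp only [Real.log_exp] at h1
    have h3 : (∑ i, Real.exp (-(g i (θ t))) * -(g i (θ t)))
        = -∑ i, Real.exp (-(g i (θ t))) * g i (θ t) := by
      rw [← Finset.sum_neg_distrib]
      apply Finset.sum_congr rfl
      intro i _
      ring
    rw [h3] at h1
    rw [hLS t, hFeq t, hAr t]
    have hn0 : (0:ℝ) ≤ 1/(n:ℝ) := by positivity
    nlinarith [h1, hn0]
  -- Cauchy-Schwarz inequality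
  have hCS : ∀ t, A t ^ 2 ≤ Q t * (lmax * W t) := by
    intro t
    have hcs := Finset.sum_mul_sq_le_sq_mul_sq Finset.univ
      (fun j => Real.sqrt (l j) * θ t j) (fun j => Real.sqrt (l j) * w t j)
    have e1 : ∑ j, (Real.sqrt (l j) * θ t j) * (Real.sqrt (l j) * w t j)
        = ∑ j, (w t j) * (l j * θ t j) := by
      apply Finset.sum_congr rfl
      intro j _
      have h := Real.mul_self_sqrt (hl j)
      calc (Real.sqrt (l j) * θ t j) * (Real.sqrt (l j) * w t j)
          = (Real.sqrt (l j) * Real.sqrt (l j)) * (θ t j * w t j) := by ring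
        _ = w t j * (l j * θ t j) := by rw [h]; ring
    have e2 : ∑ j, (Real.sqrt (l j) * θ t j)^2 = Q t := by
      show _ = ∑ j, l j * (θ t j)^2
      apply Finset.sum_congr rfl
      intro j _
      rw [mul_pow, Real.sq_sqrt (hl j)]
    have e3 : ∑ j, (Real.sqrt (l j) * w t j)^2 ≤ lmax * W t := by
      have h4 : ∑ j, (Real.sqrt (l j) * w t j)^2 = ∑ j, l j * (w t j)^2 := by
        apply Finset.sum_congr rfl
        intro j _
        rw [mul_pow, Real.sq_sqrt (hl j)]
      rw [h4, hWdef, Finset.mul_sum]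
      apply Finset.sum_le_sum
      intro j _
      exact mul_le_mul_of_nonneg_right (hlmax.2 ⟨j, rfl⟩) (sq_nonneg _)
    calc A t ^ 2 = (∑ j, (w t j) * (l j * θ t j))^2 := by rw [hAeq t]; ring
      _ = (∑ j, (Real.sqrt (l j) * θ t j) * (Real.sqrt (l j) * w t j))^2 := by rw [e1]
      _ ≤ (∑ j, (Real.sqrt (l j) * θ t j)^2) * (∑ j, (Real.sqrt (l j) * w t j)^2) := hcs
      _ = Q t * (∑ j, (Real.sqrt (l j) * w t j)^2) := by rw [e2]
      _ ≤ Q t * (lmax * W t) := mul_le_mul_of_nonneg_left e3 (hQnn t)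
  -- rewriting the margin
  have hγeq : ∀ t, smoothMargin l lmax g (θ t) = F t / Q t ^ c := by
    intro t
    show Real.log (((n:ℝ) * expLoss g (θ t))⁻¹) / qhNorm l (θ t) ^ ((1:ℝ) / lmax)
        = F t / Q t ^ c
    have h1 : qhNorm l (θ t) = Q t ^ ((1:ℝ)/2) := by
      show Real.sqrt (∑ i, l i * θ t i ^ 2) = Q t ^ ((1:ℝ)/2)
      rw [Real.sqrt_eq_rpow]
    have h2 : qhNorm l (θ t) ^ ((1:ℝ)/lmax) = Q t ^ c := by
      rw [h1, ← Real.rpow_mul (hQnn t)]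
    rw [h2]
  -- derivative of the margin
  have hγ' : ∀ t, t₀ ≤ t → HasDerivAt (fun s => smoothMargin l lmax g (θ s))
      ((W t / Lθ t * Q t ^ c - F t * ((2 * A t) * c * Q t ^ (c-1))) / (Q t ^ c)^2) t := by
    intro t ht
    have hQp := hQpos t ht
    have hrp : HasDerivAt (fun s => Q s ^ c) ((2 * A t) * c * Q t ^ (c-1)) t :=
      (hQ' t ht).rpow_const (Or.inl hQp.ne')
    have h1 := (hF' t ht).div hrp (Real.rpow_pos_of_pos hQp c).ne'
    have h2 : (fun s => smoothMargin l lmax g (θ s)) = fun s => F s / Q s ^ c :=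
      funext hγeq
    rw [h2]
    exact h1
  -- conclude
  apply monotoneOn_of_hasDerivWithinAt_nonneg (convex_Ici t₀)
    (f' := fun t => (W t / Lθ t * Q t ^ c - F t * ((2 * A t) * c * Q t ^ (c-1))) / (Q t ^ c)^2)
  · intro t ht
    exact (hγ' t ht).continuousAt.continuousWithinAt
  · intro t ht
    rw [interior_Ici] at ht
    exact (hγ' t ht.le).hasDerivWithinAt
  · intro t ht
    rw [interior_Ici] at ht
    have ht' : t ∈ Set.Ici t₀ := Set.mem_Ici.mpr (le_of_lt ht)
    apply div_nonneg _ (sq_nonneg _)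
    have hQp := hQpos t ht'
    have hkey : Lθ t * F t * A t ≤ lmax * (Q t * W t) := by
      have h1 := hEnt t ht'
      have h2 := hCS t
      have hApos : 0 < A t := lt_of_lt_of_le (mul_pos (hLpos t) (hFpos t ht')) h1
      nlinarith [mul_le_mul_of_nonneg_right h1 hApos.le, h2]
    have hc1 : Q t ^ (c - 1) = Q t ^ c / Q t := by
      rw [Real.rpow_sub hQp, Real.rpow_one]
    have hc2 : 0 < Q t ^ c := Real.rpow_pos_of_pos hQp c
    rw [hc1]
    have h3 : W t / Lθ t * Q t ^ c - F t * ((2 * A t) * c * (Q t ^ c / Q t))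
        = (Q t ^ c / Q t) * (W t / Lθ t * Q t - 2*c*(F t * A t)) := by
      field_simp
    rw [h3]
    apply mul_nonneg (by positivity)
    have h4 : 2*c = 1/lmax := by rw [hcdef]; ring
    have h5 : (1/lmax) * (F t * A t) ≤ W t / Lθ t * Q t := by
      rw [show W t / Lθ t * Q t = (W t * Q t)/ Lθ t from by ring,
        show (1/lmax) * (F t * A t) = (F t * A t)/lmax from by ring,
        div_le_div_iff₀ hlmax_pos (hLpos t)]
      nlinarith [hkey]
    rw [h4]
    linarith
end

section
/- Let λ ∈ ℝ^m with λ_i ≥ 0 for all i and λ not identically zero, Λ = diag(λ), λ_max = max_i λ_i. Let g_1,…,g_n : ℝ^m → ℝ be Λ-quasi-homogeneous, L(θ) = (1/n) Σ_i e^{−g_i(θ)}, q_min(θ) = min_i g_i(θ), and γ̃(θ) = log((nL(θ))^{−1}) / ‖θ‖_Λ^{1/λ_max}. Let θ ∈ ℝ^m with ‖θ‖_Λ > 0 and n L(θ) ≤ 1, let θ̂ be its Λ-normalization, and suppose ‖θ̂‖_{Λmax} ≥ κ for some κ > 0. Then γ̃(θ) ≤ q_min(θ̂) / κ^{1/λ_max}.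 In particular, if additionally q_min(θ̂) ≤ k, then γ̃(θ) ≤ k / κ^{1/λ_max}. -/
/-- The `Λ_max`-seminorm `‖θ‖_{Λmax} = sqrt (Σ_{i : λ_i = λ_max} λ_i θ_i²)`. -/
noncomputable def qhMaxNorm {m : ℕ} (l : Fin m → ℝ) (lmax : ℝ)
    (θ : EuclideanSpace ℝ (Fin m)) : ℝ :=
  Real.sqrt (∑ i, if l i = lmax then l i * θ i ^ 2 else 0)

/-- Pointwise upper bound on the smooth normalized margin (Lemma F.3): if
`‖θ̂‖_{Λmax} ≥ κ > 0` then `γ̃(θ) ≤ q_min(θ̂)/κ^{1/λmax}`; in particular, if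
`q_min(θ̂) ≤ k` then `γ̃(θ) ≤ k/κ^{1/λmax}`. -/
theorem stmt_9 {m n : ℕ} (hn : 0 < n)
    (l : Fin m → ℝ) (hl : ∀ i, 0 ≤ l i) (hl0 : l ≠ 0)
    (lmax : ℝ) (hlmax : IsGreatest (Set.range l) lmax)
    (g : Fin n → EuclideanSpace ℝ (Fin m) → ℝ)
    (hqh : ∀ i (α : ℝ) (θ : EuclideanSpace ℝ (Fin m)),
      g i (qhScale l α θ) = Real.exp α * g i θ)
    (θ : EuclideanSpace ℝ (Fin m))
    (hθ : 0 < qhNorm l θ)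
    (hsep : n * expLoss g θ ≤ 1)
    (τ : ℝ) (hτ : qhNorm l (qhScale l (-τ) θ) = 1)
    (κ : ℝ) (hκ : 0 < κ)
    (hκmax : κ ≤ qhMaxNorm l lmax (qhScale l (-τ) θ)) :
    smoothMargin l lmax g θ ≤ (⨅ i, g i (qhScale l (-τ) θ)) / κ ^ (1 / lmax) ∧
    ∀ k : ℝ, (⨅ i, g i (qhScale l (-τ) θ)) ≤ k →
      smoothMargin l lmax g θ ≤ k / κ ^ (1 / lmax) := by
  have hnem : Nonempty (Fin n) := ⟨⟨0, hn⟩⟩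
  obtain ⟨i0, hi0⟩ : ∃ i, l i ≠ 0 := by
    by_contra h; push_neg at h; exact hl0 (funext h)
  have hlmaxpos : 0 < lmax :=
    lt_of_lt_of_le ((hl i0).lt_of_ne (Ne.symm hi0)) (hlmax.2 ⟨i0, rfl⟩)
  set θh := qhScale l (-τ) θ with hθh
  have hscale : qhScale l τ θh = θ := by
    ext i
    show Real.exp (τ * l i) * (Real.exp (-τ * l i) * θ i) = θ i
    rw [← mul_assoc, ← Real.exp_add]
    ring_nf
    simp
  have hg : ∀ i, g i θ = Real.exp τ * g i θh := fun i => by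
    rw [← hscale, hqh]
  set S := ∑ i, Real.exp (-(g i θ)) with hS
  have hnL : (n : ℝ) * expLoss g θ = S := by
    have hn' : (n : ℝ) ≠ 0 := Nat.cast_ne_zero.mpr hn.ne'
    rw [hS]; unfold expLoss; rw [← mul_assoc, mul_one_div_cancel hn', one_mul]
  have hSpos : 0 < S :=
    Finset.sum_pos (fun i _ => Real.exp_pos _) Finset.univ_nonempty
  have hS1 : S ≤ 1 := by rw [← hnL]; exact hsep
  -- infimum attained
  obtain ⟨j0, hj0⟩ := Finite.exists_min (fun i => g i θh)
  have hbdd : BddBelow (Set.range fun i => g i θh) := (Set.finite_range _).bddBelow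
  have hqeq : (⨅ i, g i θh) = g j0 θh :=
    le_antisymm (ciInf_le hbdd j0) (le_ciInf hj0)
  set q := (⨅ i, g i θh) with hq
  have hlow : Real.exp (-(Real.exp τ * q)) ≤ S := by
    rw [hqeq, ← hg j0, hS]
    exact Finset.single_le_sum (f := fun i => Real.exp (-(g i θ)))
      (fun i _ => (Real.exp_pos _).le) (Finset.mem_univ j0)
  have hlog : Real.log (S⁻¹) ≤ Real.exp τ * q := by
    rw [Real.log_inv]
    have := Real.log_le_log (Real.exp_pos _) hlow
    rw [Real.log_exp] at this
    linarith
  have hlognn : 0 ≤ Real.log (S⁻¹) := by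
    rw [Real.log_inv]
    have := Real.log_nonpos hSpos.le hS1
    linarith
  -- norm bounds
  have hmaxscale : qhMaxNorm l lmax θh = Real.exp (-τ * lmax) * qhMaxNorm l lmax θ := by
    unfold qhMaxNorm
    rw [← Real.sqrt_sq (Real.exp_pos (-τ * lmax)).le, ← Real.sqrt_mul (sq_nonneg _),
      Finset.mul_sum]
    congr 1
    apply Finset.sum_congr rfl
    intro i _
    show (if l i = lmax then l i * (Real.exp (-τ * l i) * θ i) ^ 2 else 0) = _
    split_ifs with h
    · rw [h]; ring
    · ring
  have hmaxle : qhMaxNorm l lmax θ ≤ qhNorm l θ := by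
    apply Real.sqrt_le_sqrt
    apply Finset.sum_le_sum
    intro i _
    split_ifs with h
    · exact le_refl _
    · exact mul_nonneg (hl i) (sq_nonneg _)
  have hnormge : Real.exp (τ * lmax) * κ ≤ qhNorm l θ := by
    have h1 : κ ≤ Real.exp (-τ * lmax) * qhNorm l θ := by
      calc κ ≤ qhMaxNorm l lmax θh := hκmax
        _ = Real.exp (-τ * lmax) * qhMaxNorm l lmax θ := hmaxscale
        _ ≤ Real.exp (-τ * lmax) * qhNorm l θ := by
            exact mul_le_mul_of_nonneg_left hmaxle (Real.exp_pos _).le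
    have h2 := mul_le_mul_of_nonneg_left h1 (Real.exp_pos (τ * lmax)).le
    rwa [← mul_assoc, ← Real.exp_add, show τ * lmax + -τ * lmax = 0 by ring,
      Real.exp_zero, one_mul] at h2
  have hκpow : (0:ℝ) < κ ^ (1 / lmax) := Real.rpow_pos_of_pos hκ _
  have hdenom : Real.exp τ * κ ^ (1 / lmax) ≤ qhNorm l θ ^ (1 / lmax) := by
    have h1 : (Real.exp (τ * lmax) * κ) ^ (1 / lmax) ≤ qhNorm l θ ^ (1 / lmax) :=
      Real.rpow_le_rpow (by positivity) hnormge (by positivity)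
    rwa [Real.mul_rpow (Real.exp_pos _).le hκ.le,
      Real.rpow_def_of_pos (Real.exp_pos _), Real.log_exp,
      show τ * lmax * (1 / lmax) = τ by field_simp] at h1
  have hmain : smoothMargin l lmax g θ ≤ q / κ ^ (1 / lmax) := by
    unfold smoothMargin
    rw [hnL]
    have hq0 : 0 ≤ Real.exp τ * q := le_trans hlognn hlog
    calc Real.log (S⁻¹) / qhNorm l θ ^ (1 / lmax)
        ≤ (Real.exp τ * q) / (Real.exp τ * κ ^ (1 / lmax)) :=
          div_le_div₀ hq0 hlog (by positivity) hdenom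
      _ = q / κ ^ (1 / lmax) := by
          rw [mul_div_mul_left _ _ (Real.exp_pos τ).ne']
  refine ⟨hmain, fun k hk => le_trans hmain ?_⟩
  exact div_le_div_of_nonneg_right hk hκpow.le
end
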